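/- Let n ≥ 3, t ≥ 1, and let j : Fin t → ℤ satisfy j s ≢ 0 (mod n) and 2·(j s) ≢ 0 (mod n) for all s. If the automorphism group of GI(n;j) has a subgroup that acts simply transitively on the vertices and contains the standard rotation ρ : (s,v) ↦ (s,v+1), then for every integer k > 1 the automorphism group of GI(n;[k]j) has a subgroup that acts simply transitively on the vertices and contains the standard rotation of GI(n;[k]j). -/

import Mathlib

open SimpleGraph

/-- The GI-graph `GI(n; j)` on vertex set `Fin t × ZMod n`:
`(s,v)` and `(s',v')` are adjacent iff `v = v'` and `s ≠ s'` (a spoke edge), or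
`s = s'` and `v' = v + j s` or `v' = v - j s` in `ZMod n` (a layer edge). -/
def GI (n t : ℕ) (j : Fin t → ℤ) : SimpleGraph (Fin t × ZMod n) :=
  SimpleGraph.fromRel (fun x y =>
    (x.2 = y.2 ∧ x.1 ≠ y.1) ∨ (x.1 = y.1 ∧ y.2 = x.2 + (j x.1 : ZMod n)))

/-- A map on vertices respects the fundamental edge-partition of `GI(n;j)` if it maps
spoke edges to spoke edges and layer edges to layer edges. -/
def RespectsPart (n t : ℕ) (j : Fin t → ℤ) (f : Fin t × ZMod n → Fin t × ZMod n) : Prop :=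
  (∀ x y : Fin t × ZMod n, (GI n t j).Adj x y → x.2 = y.2 → (f x).2 = (f y).2) ∧
  (∀ x y : Fin t × ZMod n, (GI n t j).Adj x y → x.1 = y.1 → (f x).1 = (f y).1)

/-- The `k`-fold concatenation `[k]j` of the sequence `j`. -/
def rep (k t : ℕ) (j : Fin t → ℤ) : Fin (k * t) → ℤ :=
  fun s => j ⟨(s : ℕ) % t, Nat.mod_lt _ (by
    rcases Nat.eq_zero_or_pos t with ht | ht
    · exact absurd s.isLt (by simp [ht])
    · exact ht)⟩

/-- The sequence `j` is primitive (mod `n`): some `j s ≡ 1 (mod n)` and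
`j i ≢ ±j k (mod n)` whenever `i ≠ k`. -/
def PrimitiveSeq (n : ℕ) {t : ℕ} (j : Fin t → ℤ) : Prop :=
  (∃ s, (j s : ZMod n) = 1) ∧
  ∀ i k : Fin t, i ≠ k →
    (j i : ZMod n) ≠ (j k : ZMod n) ∧ (j i : ZMod n) ≠ -(j k : ZMod n)

/-- The set `J = {j s mod n : s}`. -/
def Jset (n : ℕ) {t : ℕ} (j : Fin t → ℤ) : Set (ZMod n) :=
  Set.range (fun s => ((j s : ZMod n)))

/-- The set `J ∪ -J`. -/
def JJset (n : ℕ) {t : ℕ} (j : Fin t → ℤ) : Set (ZMod n) :=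
  Jset n j ∪ (Neg.neg '' Jset n j)

/-- A graph is vertex-transitive if its automorphism group acts transitively on vertices. -/
def IsVertexTransitive {V : Type*} (G : SimpleGraph V) : Prop :=
  ∀ x y : V, ∃ φ : G ≃g G, φ x = y

/-- `H` is a group of automorphisms of `G` acting simply transitively (regularly)
on the vertices. -/
def IsRegularAutGroup {V : Type*} (G : SimpleGraph V) (H : Subgroup (Equiv.Perm V)) : Prop :=
  (∀ π ∈ H, ∀ x y : V, G.Adj x y ↔ G.Adj (π x) (π y)) ∧
  ∀ x y : V, ∃! π : Equiv.Perm V, π ∈ H ∧ π x = y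

/-- A graph is a Cayley graph iff its automorphism group has a subgroup acting
simply transitively (regularly) on the vertices. -/
def IsCayley {V : Type*} (G : SimpleGraph V) : Prop :=
  ∃ H : Subgroup (Equiv.Perm V), IsRegularAutGroup G H

/-- The standard rotation `ρ : (s,v) ↦ (s, v+1)` as a permutation of the vertices. -/
def rho (n t : ℕ) : Equiv.Perm (Fin t × ZMod n) :=
  Equiv.prodCongr (Equiv.refl (Fin t)) (Equiv.addRight (1 : ZMod n))

/-- The map `λ_{i,s₁,s₂}`, which swaps `(s₁,v)` and `(s₂,v)` whenever
`v ≡ i (mod gcd(n, j s₁))` (i.e. the image of `v` under the natural map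
`ZMod n → ZMod (gcd (n, j s₁))` equals `i mod gcd(n, j s₁)`), and fixes all other
vertices. -/
def lamMap (n t : ℕ) (j : Fin t → ℤ) (s₁ s₂ : Fin t) (i : ℤ) (x : Fin t × ZMod n) :
    Fin t × ZMod n :=
  if (ZMod.cast x.2 : ZMod (Int.gcd (n : ℤ) (j s₁))) =
      ((i : ℤ) : ZMod (Int.gcd (n : ℤ) (j s₁))) then
    if x.1 = s₁ then (s₂, x.2) else if x.1 = s₂ then (s₁, x.2) else x
  else x

section AuxGI

open Equiv

lemma GI_adj_iff (n t : ℕ) (j : Fin t → ℤ) (x y : Fin t × ZMod n) :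
    (GI n t j).Adj x y ↔ x ≠ y ∧ (x.2 = y.2 ∨ (x.1 = y.1 ∧
      (y.2 = x.2 + (j x.1 : ZMod n) ∨ x.2 = y.2 + (j x.1 : ZMod n)))) := by
  rw [GI, fromRel_adj]
  constructor
  · rintro ⟨hne, h⟩
    refine ⟨hne, ?_⟩
    rcases h with (⟨h1, _⟩ | ⟨h1, h2⟩) | (⟨h1, _⟩ | ⟨h1, h2⟩)
    · exact Or.inl h1
    · exact Or.inr ⟨h1, Or.inl h2⟩
    · exact Or.inl h1.symm
    · exact Or.inr ⟨h1.symm, Or.inr (by rw [h1] at h2; exact h2)⟩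
  · rintro ⟨hne, h⟩
    refine ⟨hne, ?_⟩
    rcases h with h1 | ⟨h1, h2 | h2⟩
    · exact Or.inl (Or.inl ⟨h1, fun he => hne (Prod.ext he h1)⟩)
    · exact Or.inl (Or.inr ⟨h1, h2⟩)
    · exact Or.inr (Or.inr ⟨h1.symm, h1 ▸ h2⟩)

lemma rho_pow_apply (n t : ℕ) (m : ℕ) (x : Fin t × ZMod n) :
    ((rho n t) ^ m) x = (x.1, x.2 + (m : ZMod n)) := by
  induction m with
  | zero => simp
  | succ m ih =>
    rw [pow_succ', Equiv.Perm.mul_apply, ih]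
    simp [rho]
    ring

variable {n t : ℕ} {j : Fin t → ℤ} {H : Subgroup (Equiv.Perm (Fin t × ZMod n))}

lemma mem_rho_pow [NeZero n] (hH : IsRegularAutGroup (GI n t j) H) (hrho : rho n t ∈ H)
    {π : Equiv.Perm (Fin t × ZMod n)} (hπ : π ∈ H) {x : Fin t × ZMod n}
    (hx : (π x).1 = x.1) : ∃ m : ℕ, π = (rho n t) ^ m := by
  refine ⟨((π x).2 - x.2).val, ?_⟩
  obtain ⟨σ, hσ, huniq⟩ := hH.2 x (π x)
  have hval : ((rho n t) ^ ((π x).2 - x.2).val) x = π x := by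
    rw [rho_pow_apply, ZMod.natCast_rightInverse]
    exact Prod.ext hx.symm (by ring)
  exact (huniq π ⟨hπ, rfl⟩).trans (huniq _ ⟨pow_mem hrho _, hval⟩).symm

lemma respects_rho_pow (m : ℕ) : RespectsPart n t j ⇑((rho n t) ^ m) := by
  constructor
  · intro x y _ h2; simp [rho_pow_apply, h2]
  · intro x y _ h1; simp [rho_pow_apply, h1]

lemma two_jz_ne (hj : ∀ s, (j s : ZMod n) ≠ 0 ∧ ((2 * j s : ℤ) : ZMod n) ≠ 0) (s : Fin t) :
    (2 : ZMod n) * (j s : ZMod n) ≠ 0 := by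
  have := (hj s).2; push_cast at this; exact this

lemma layer_no_common (hj : ∀ s, (j s : ZMod n) ≠ 0 ∧ ((2 * j s : ℤ) : ZMod n) ≠ 0)
    {s : Fin t} (h3 : (3 : ZMod n) * (j s : ZMod n) ≠ 0) (w : ZMod n)
    (z : Fin t × ZMod n) (hxz : (GI n t j).Adj (s, w) z)
    (hyz : (GI n t j).Adj (s, w + (j s : ZMod n)) z) : False := by
  have hj1 := (hj s).1
  have hj2 := two_jz_ne hj s
  rw [GI_adj_iff] at hxz hyz
  obtain ⟨z1, z2⟩ := z
  obtain ⟨hne1, h1⟩ := hxz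
  obtain ⟨hne2, h2⟩ := hyz
  simp only at h1 h2
  rcases h1 with e1 | ⟨f1, e1 | e1⟩ <;> rcases h2 with e2 | ⟨f2, e2 | e2⟩
  · exact hj1 (by linear_combination e2 - e1)
  · exact hj2 (by linear_combination -e1 - e2)
  · exact hne1 (by rw [f2, e1])
  · exact hne2 (Prod.ext f1 e1.symm)
  · exact hj1 (by linear_combination e1 - e2)
  · exact hj1 (by linear_combination -e1 - e2)
  · exact hj2 (by linear_combination e2 - e1)
  · exact h3 (by linear_combination -e1 - e2)
  · exact hj1 (by linear_combination e2 - e1)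

lemma exists_third (ht3 : 3 ≤ t) (a b : Fin t) : ∃ c : Fin t, c ≠ a ∧ c ≠ b := by
  have hcard : ({a, b} : Finset (Fin t)).card ≤ 2 :=
    (Finset.card_insert_le _ _).trans (by simp)
  have : (({a, b} : Finset (Fin t)))ᶜ.Nonempty := by
    rw [← Finset.card_pos, Finset.card_compl]
    have : Fintype.card (Fin t) = t := Fintype.card_fin t
    omega
  obtain ⟨c, hc⟩ := this
  simp only [Finset.mem_compl, Finset.mem_insert, Finset.mem_singleton, not_or] at hc
  exact ⟨c, hc.1, hc.2⟩

lemma fin2_eq {t : ℕ} (h : t ≤ 2) {a b c : Fin t} (hac : a ≠ c) (hbc : b ≠ c) : a = b := by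
  have h1 := a.isLt; have h2 := b.isLt; have h3 := c.isLt
  have hac' : a.val ≠ c.val := fun h => hac (Fin.ext h)
  have hbc' : b.val ≠ c.val := fun h => hbc (Fin.ext h)
  exact Fin.ext (by omega)

lemma not_mixed [NeZero n] (hj : ∀ s, (j s : ZMod n) ≠ 0 ∧ ((2 * j s : ℤ) : ZMod n) ≠ 0)
    (hH : IsRegularAutGroup (GI n t j) H) (ht3 : 3 ≤ t)
    {s₀ sx : Fin t} (h0 : (3 : ZMod n) * (j s₀ : ZMod n) ≠ 0)
    (hx : (3 : ZMod n) * (j sx : ZMod n) = 0) : False := by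
  have hj0 := (hj s₀).1
  have hjx := (hj sx).1
  have hjx2 := two_jz_ne hj sx
  obtain ⟨π, ⟨hπ, hπ0⟩, -⟩ := hH.2 (s₀, (0 : ZMod n)) (sx, 0)
  set y : Fin t × ZMod n := (s₀, (j s₀ : ZMod n)) with hy
  have hadj : (GI n t j).Adj (s₀, 0) y := by
    rw [GI_adj_iff]
    exact ⟨fun h => hj0 (congrArg Prod.snd h).symm, Or.inr ⟨rfl, Or.inl (by ring)⟩⟩
  have hadj' : (GI n t j).Adj (sx, 0) (π y) := by
    have := (hH.1 π hπ _ _).mp hadj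
    rwa [hπ0] at this
  -- find a common neighbor w of (sx,0) and π y
  have hcn : ∃ w, (GI n t j).Adj (sx, 0) w ∧ (GI n t j).Adj (π y) w := by
    rw [GI_adj_iff] at hadj'
    obtain ⟨hne, hor⟩ := hadj'
    rcases hor with hsec | ⟨hfst, hstep⟩
    · -- spoke edge : (π y).2 = 0 and (π y).1 ≠ sx
      have hf : sx ≠ (π y).1 := by
        intro h
        exact hne (Prod.ext h hsec)
      obtain ⟨c, hc1, hc2⟩ := exists_third ht3 sx (π y).1
      refine ⟨(c, 0), ?_, ?_⟩
      · rw [GI_adj_iff]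
        exact ⟨fun h => hc1 (congrArg Prod.fst h).symm, Or.inl rfl⟩
      · rw [GI_adj_iff]
        exact ⟨fun h => hc2 (congrArg Prod.fst h).symm, Or.inl hsec.symm⟩
    · -- layer edge at sx
      simp only at hfst hstep
      rcases hstep with hs | hs
      · -- (π y).2 = j sx
        have jc : ((j (π y).1 : ℤ) : ZMod n) = ((j sx : ℤ) : ZMod n) := by rw [← hfst]
        refine ⟨(sx, -((j sx : ℤ) : ZMod n)), ?_, ?_⟩
        · rw [GI_adj_iff]
          refine ⟨fun h => hjx (by
            have := congrArg Prod.snd h; simp only at this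
            linear_combination this), ?_⟩
          exact Or.inr ⟨rfl, Or.inr (by ring)⟩
        · rw [GI_adj_iff]
          refine ⟨fun h => hjx2 (by
            have := congrArg Prod.snd h; simp only at this
            linear_combination this - hs), ?_⟩
          exact Or.inr ⟨hfst.symm, Or.inl (by linear_combination -hs - hx - jc)⟩
      · -- 0 = (π y).2 + j sx
        have jc : ((j (π y).1 : ℤ) : ZMod n) = ((j sx : ℤ) : ZMod n) := by rw [← hfst]
        refine ⟨(sx, ((j sx : ℤ) : ZMod n)), ?_, ?_⟩
        · rw [GI_adj_iff]
          exact ⟨fun h => hjx (congrArg Prod.snd h).symm, Or.inr ⟨rfl, Or.inl (by ring)⟩⟩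
        · rw [GI_adj_iff]
          refine ⟨fun h => hjx2 (by
            have := congrArg Prod.snd h; simp only at this
            linear_combination -hs - this), ?_⟩
          exact Or.inr ⟨hfst.symm, Or.inr (by linear_combination -hs - hx - jc)⟩
  obtain ⟨w, hw1, hw2⟩ := hcn
  have c1 : (GI n t j).Adj (s₀, 0) (π⁻¹ w) := by
    have := (hH.1 π⁻¹ (inv_mem hπ) _ _).mp hw1
    rwa [← hπ0, Equiv.Perm.coe_inv, Equiv.symm_apply_apply] at this
  have c2 : (GI n t j).Adj (s₀, 0 + (j s₀ : ZMod n)) (π⁻¹ w) := by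
    have := (hH.1 π⁻¹ (inv_mem hπ) _ _).mp hw2
    rw [Equiv.Perm.coe_inv, Equiv.symm_apply_apply] at this
    simpa [hy, zero_add] using this
  exact layer_no_common hj h0 0 (π⁻¹ w) c1 c2

lemma good_all [NeZero n] (hj : ∀ s, (j s : ZMod n) ≠ 0 ∧ ((2 * j s : ℤ) : ZMod n) ≠ 0)
    (hH : IsRegularAutGroup (GI n t j) H) (hrho : rho n t ∈ H)
    (hcase : t ≤ 2 ∨ (3 ≤ t ∧ ∀ s, (3 : ZMod n) * (j s : ZMod n) ≠ 0)) :
    ∀ π ∈ H, RespectsPart n t j ⇑π := by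
  -- strong layer preservation in the case t ≤ 2
  have SL : t ≤ 2 → ∀ π ∈ H, ∀ x y : Fin t × ZMod n, x.1 = y.1 → (π x).1 = (π y).1 := by
    intro ht2 π hπ x y hxy
    by_cases hfix : ∃ z, (π z).1 = z.1
    · obtain ⟨z, hz⟩ := hfix
      obtain ⟨m, rfl⟩ := mem_rho_pow hH hrho hπ hz
      simp [rho_pow_apply, hxy]
    · push_neg at hfix
      have hx := hfix x
      have hy := hfix y
      rw [← hxy] at hy
      exact fin2_eq ht2 hx hy
  -- spoke part, all π ∈ H
  have SP : ∀ π ∈ H, ∀ x y : Fin t × ZMod n,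
      (GI n t j).Adj x y → x.2 = y.2 → (π x).2 = (π y).2 := by
    intro π hπ x y hadj h2
    have hxy1 : x.1 ≠ y.1 := fun h => (GI n t j).ne_of_adj hadj (Prod.ext h h2)
    have hadj' : (GI n t j).Adj (π x) (π y) := (hH.1 π hπ x y).mp hadj
    by_contra hne2
    rw [GI_adj_iff] at hadj'
    obtain ⟨hne', hor⟩ := hadj'
    rcases hor with h | ⟨hfst, hstep⟩
    · exact hne2 h
    · rcases hcase with ht2 | ⟨ht3, hall3⟩
      · have := SL ht2 π⁻¹ (inv_mem hπ) (π x) (π y) hfst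
        simp only [Equiv.Perm.coe_inv, Equiv.symm_apply_apply] at this
        exact hxy1 this
      · obtain ⟨c, hca, hcb⟩ := exists_third ht3 x.1 y.1
        have hxz : (GI n t j).Adj x (c, x.2) := by
          rw [GI_adj_iff]
          exact ⟨fun h => hca (congrArg Prod.fst h).symm, Or.inl rfl⟩
        have hyz : (GI n t j).Adj y (c, x.2) := by
          rw [GI_adj_iff]
          exact ⟨fun h => hcb (congrArg Prod.fst h).symm, Or.inl h2.symm⟩
        have hxz' : (GI n t j).Adj (π x) (π (c, x.2)) := (hH.1 π hπ _ _).mp hxz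
        have hyz' : (GI n t j).Adj (π y) (π (c, x.2)) := (hH.1 π hπ _ _).mp hyz
        rcases hstep with hs | hs
        · refine layer_no_common hj (hall3 (π x).1) (π x).2 (π (c, x.2)) hxz' ?_
          rw [show ((π x).1, (π x).2 + ((j (π x).1 : ℤ) : ZMod n)) = π y from
            Prod.ext hfst hs.symm]
          exact hyz'
        · refine layer_no_common hj (hall3 (π y).1) (π y).2 (π (c, x.2)) hyz' ?_
          rw [show ((π y).1, (π y).2 + ((j (π y).1 : ℤ) : ZMod n)) = π x from
            Prod.ext hfst.symm (by rw [← hfst]; exact hs.symm)]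
          exact hxz'
  -- layer part, all π ∈ H
  have LP : ∀ π ∈ H, ∀ x y : Fin t × ZMod n,
      (GI n t j).Adj x y → x.1 = y.1 → (π x).1 = (π y).1 := by
    intro π hπ x y hadj h1
    by_contra hne1
    have hadj' : (GI n t j).Adj (π x) (π y) := (hH.1 π hπ x y).mp hadj
    have h2' : (π x).2 = (π y).2 := by
      rw [GI_adj_iff] at hadj'
      rcases hadj'.2 with h | ⟨hf, _⟩
      · exact h
      · exact absurd hf hne1
    have := SP π⁻¹ (inv_mem hπ) (π x) (π y) hadj' h2'
    simp only [Equiv.Perm.coe_inv, Equiv.symm_apply_apply] at this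
    exact (GI n t j).ne_of_adj hadj (Prod.ext h1 this)
  exact fun π hπ => ⟨SP π hπ, LP π hπ⟩

def bigE (n k t : ℕ) : Fin (k * t) × ZMod n ≃ Fin k × (Fin t × ZMod n) :=
  ((finProdFinEquiv.symm).prodCongr (Equiv.refl (ZMod n))).trans
    (Equiv.prodAssoc (Fin k) (Fin t) (ZMod n))

lemma bigE_apply (n k t : ℕ) (X : Fin (k * t) × ZMod n) :
    bigE n k t X = (X.1.divNat, (X.1.modNat, X.2)) := rfl

lemma rep_modNat (k t : ℕ) (j : Fin t → ℤ) (S : Fin (k * t)) :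
    rep k t j S = j S.modNat := rfl

lemma fin_eq_iff {k t : ℕ} (S S' : Fin (k * t)) :
    S = S' ↔ S.divNat = S'.divNat ∧ S.modNat = S'.modNat := by
  constructor
  · rintro rfl; exact ⟨rfl, rfl⟩
  · rintro ⟨h1, h2⟩
    have := congrArg finProdFinEquiv (Prod.ext h1 h2 :
      (finProdFinEquiv.symm S : Fin k × Fin t) = finProdFinEquiv.symm S')
    rwa [Equiv.apply_symm_apply, Equiv.apply_symm_apply] at this

lemma big_adj_iff (n k t : ℕ) (j : Fin t → ℤ) (X Y : Fin (k * t) × ZMod n) :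
    (GI n (k * t) (rep k t j)).Adj X Y ↔ X ≠ Y ∧
      ((bigE n k t X).2.2 = (bigE n k t Y).2.2 ∨
       ((bigE n k t X).1 = (bigE n k t Y).1 ∧ (bigE n k t X).2.1 = (bigE n k t Y).2.1 ∧
        ((bigE n k t Y).2.2 = (bigE n k t X).2.2 + ((j (bigE n k t X).2.1 : ℤ) : ZMod n) ∨
         (bigE n k t X).2.2 = (bigE n k t Y).2.2 + ((j (bigE n k t X).2.1 : ℤ) : ZMod n)))) := by
  rw [GI_adj_iff]
  simp only [bigE_apply, rep_modNat]
  constructor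
  · rintro ⟨hne, h⟩
    refine ⟨hne, ?_⟩
    rcases h with h | ⟨h1, h2⟩
    · exact Or.inl h
    · rw [fin_eq_iff] at h1
      exact Or.inr ⟨h1.1, h1.2, h2⟩
  · rintro ⟨hne, h⟩
    refine ⟨hne, ?_⟩
    rcases h with h | ⟨h1, h2, h3⟩
    · exact Or.inl h
    · exact Or.inr ⟨(fin_eq_iff _ _).mpr ⟨h1, h2⟩, h3⟩

def liftPerm (n k t : ℕ) [NeZero k] (c : Fin k) (π : Equiv.Perm (Fin t × ZMod n)) :
    Equiv.Perm (Fin (k * t) × ZMod n) :=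
  ((bigE n k t).symm.permCongr) ((Equiv.addRight c).prodCongr π)

lemma liftPerm_bigE (n k t : ℕ) [NeZero k] (c : Fin k) (π : Equiv.Perm (Fin t × ZMod n))
    (X : Fin (k * t) × ZMod n) :
    bigE n k t (liftPerm n k t c π X) = ((bigE n k t X).1 + c, π (bigE n k t X).2) := by
  simp [liftPerm, Equiv.permCongr_apply, Prod.map]

lemma liftPerm_mul (n k t : ℕ) [NeZero k] (c c' : Fin k)
    (π π' : Equiv.Perm (Fin t × ZMod n)) :
    liftPerm n k t c π * liftPerm n k t c' π' = liftPerm n k t (c' + c) (π * π') := by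
  apply Equiv.ext
  intro X
  apply (bigE n k t).injective
  simp [Equiv.Perm.mul_apply, liftPerm_bigE, add_assoc]

lemma liftPerm_one (n k t : ℕ) [NeZero k] : liftPerm n k t 0 1 = 1 := by
  apply Equiv.ext
  intro X
  apply (bigE n k t).injective
  simp [liftPerm_bigE]

lemma liftPerm_rho (n k t : ℕ) [NeZero k] :
    liftPerm n k t 0 (rho n t) = rho n (k * t) := by
  apply Equiv.ext
  intro X
  apply (bigE n k t).injective
  rw [liftPerm_bigE]
  simp [bigE_apply, rho]

lemma lift_adj (n k t : ℕ) [NeZero k] {j : Fin t → ℤ}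
    {H : Subgroup (Equiv.Perm (Fin t × ZMod n))}
    (hH : IsRegularAutGroup (GI n t j) H)
    (hgood : ∀ π ∈ H, RespectsPart n t j ⇑π)
    {π : Equiv.Perm (Fin t × ZMod n)} (hπ : π ∈ H) (c : Fin k)
    {X Y : Fin (k * t) × ZMod n} (hadj : (GI n (k * t) (rep k t j)).Adj X Y) :
    (GI n (k * t) (rep k t j)).Adj (liftPerm n k t c π X) (liftPerm n k t c π Y) := by
  rw [big_adj_iff] at hadj ⊢
  obtain ⟨hne, hor⟩ := hadj
  refine ⟨fun h => hne ((liftPerm n k t c π).injective h), ?_⟩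
  rw [liftPerm_bigE, liftPerm_bigE]
  set A := bigE n k t X with hA
  set B := bigE n k t Y with hB
  dsimp only
  rcases hor with hsec | ⟨h1, h2, h3⟩
  · by_cases hxy : A.2 = B.2
    · rw [hxy]; exact Or.inl rfl
    · have hadj2 : (GI n t j).Adj A.2 B.2 := by
        rw [GI_adj_iff]; exact ⟨hxy, Or.inl hsec⟩
      exact Or.inl ((hgood π hπ).1 A.2 B.2 hadj2 hsec)
  · have hne2 : A.2 ≠ B.2 := by
      intro h
      exact hne ((bigE n k t).injective (Prod.ext h1 h))
    have hadj2 : (GI n t j).Adj A.2 B.2 := by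
      rw [GI_adj_iff]; exact ⟨hne2, Or.inr ⟨h2, h3⟩⟩
    have hf : (π A.2).1 = (π B.2).1 := (hgood π hπ).2 A.2 B.2 hadj2 h2
    have hadj3 : (GI n t j).Adj (π A.2) (π B.2) := (hH.1 π hπ _ _).mp hadj2
    rw [GI_adj_iff] at hadj3
    obtain ⟨hne3, hor3⟩ := hadj3
    rcases hor3 with hsec3 | ⟨_, hstep3⟩
    · exact absurd (Prod.ext hf hsec3) hne3
    · exact Or.inr ⟨by rw [h1], hf, hstep3⟩

lemma lift_construction (n k t : ℕ) [NeZero n] [NeZero k] (j : Fin t → ℤ)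
    (H : Subgroup (Equiv.Perm (Fin t × ZMod n)))
    (hH : IsRegularAutGroup (GI n t j) H) (hrho : rho n t ∈ H)
    (hgood : ∀ π ∈ H, RespectsPart n t j ⇑π) :
    ∃ H' : Subgroup (Equiv.Perm (Fin (k * t) × ZMod n)),
      IsRegularAutGroup (GI n (k * t) (rep k t j)) H' ∧ rho n (k * t) ∈ H' := by
  refine ⟨{ carrier := {g | ∃ c π, π ∈ H ∧ g = liftPerm n k t c π}
            one_mem' := ⟨0, 1, H.one_mem, (liftPerm_one n k t).symm⟩
            mul_mem' := ?_
            inv_mem' := ?_ }, ⟨?_, ?_⟩, ?_⟩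
  · rintro a b ⟨c, π, hπ, rfl⟩ ⟨c', π', hπ', rfl⟩
    exact ⟨c' + c, π * π', H.mul_mem hπ hπ', liftPerm_mul n k t c c' π π'⟩
  · rintro a ⟨c, π, hπ, rfl⟩
    refine ⟨-c, π⁻¹, H.inv_mem hπ, ?_⟩
    have h1 : liftPerm n k t (-c) π⁻¹ * liftPerm n k t c π = 1 := by
      rw [liftPerm_mul]
      simp [liftPerm_one]
    exact inv_eq_of_mul_eq_one_left h1
  · rintro g ⟨c, π, hπ, rfl⟩ X Y
    constructor
    · exact lift_adj n k t hH hgood hπ c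
    · intro h
      have h2 := lift_adj n k t hH hgood (H.inv_mem hπ) (-c) h
      have h3 : ∀ Z, liftPerm n k t (-c) π⁻¹ (liftPerm n k t c π Z) = Z := by
        intro Z
        rw [← Equiv.Perm.mul_apply, liftPerm_mul]
        simp [liftPerm_one]
      rwa [h3, h3] at h2
  · intro X Y
    obtain ⟨π, ⟨hπ, hπx⟩, huniq⟩ := hH.2 (bigE n k t X).2 (bigE n k t Y).2
    refine ⟨liftPerm n k t ((bigE n k t Y).1 - (bigE n k t X).1) π,
      ⟨⟨_, π, hπ, rfl⟩, ?_⟩, ?_⟩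
    · apply (bigE n k t).injective
      rw [liftPerm_bigE]
      exact Prod.ext (by rw [add_comm]; exact sub_add_cancel _ _) hπx
    · rintro g ⟨⟨c', π', hπ', rfl⟩, hval⟩
      have hval' := congrArg (bigE n k t) hval
      rw [liftPerm_bigE] at hval'
      have e1 : (bigE n k t X).1 + c' = (bigE n k t Y).1 := congrArg Prod.fst hval'
      have e2 : π' (bigE n k t X).2 = (bigE n k t Y).2 := congrArg Prod.snd hval'
      rw [huniq π' ⟨hπ', e2⟩, show c' = (bigE n k t Y).1 - (bigE n k t X).1 from by
        rw [← e1]; abel]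
  · exact ⟨0, rho n t, hrho, (liftPerm_rho n k t).symm⟩

lemma tor3 {n : ℕ} [NeZero n] {a b : ZMod n} (ha0 : a ≠ 0) (ha : (3 : ZMod n) * a = 0)
    (hb0 : b ≠ 0) (hb : (3 : ZMod n) * b = 0) : a = b ∨ a = -b := by
  have hva : ((a.val : ℕ) : ZMod n) = a := ZMod.natCast_rightInverse a
  have hvb : ((b.val : ℕ) : ZMod n) = b := ZMod.natCast_rightInverse b
  have hal : a.val < n := ZMod.val_lt a
  have hbl : b.val < n := ZMod.val_lt b
  have ha0' : a.val ≠ 0 := fun h => ha0 (by rw [← hva, h]; simp)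
  have hb0' : b.val ≠ 0 := fun h => hb0 (by rw [← hvb, h]; simp)
  have hda : n ∣ 3 * a.val := by
    rw [← ZMod.natCast_eq_zero_iff]
    push_cast
    rw [hva]
    exact ha
  have hdb : n ∣ 3 * b.val := by
    rw [← ZMod.natCast_eq_zero_iff]
    push_cast
    rw [hvb]
    exact hb
  have key : ∀ v : ℕ, v ≠ 0 → v < n → n ∣ 3 * v → 3 * v = n ∨ 3 * v = 2 * n := by
    intro v hv0 hvl ⟨c, hc⟩
    match c with
    | 0 => omega
    | 1 => omega
    | 2 => omega
    | (c + 3) =>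
      exfalso
      have h1 : n * 3 ≤ n * (c + 3) := Nat.mul_le_mul_left _ (by omega)
      rw [← hc] at h1
      omega
  have ka := key a.val ha0' hal hda
  have kb := key b.val hb0' hbl hdb
  have : a.val = b.val ∨ a.val + b.val = n := by omega
  rcases this with h | h
  · left; rw [← hva, ← hvb, h]
  · right
    have : a + b = 0 := by
      rw [← hva, ← hvb, ← Nat.cast_add, h]
      exact ZMod.natCast_self n
    exact eq_neg_of_add_eq_zero_left this

lemma exc_adj (n k t : ℕ) (j : Fin t → ℤ) [NeZero n]
    (hj : ∀ s, (j s : ZMod n) ≠ 0 ∧ ((2 * j s : ℤ) : ZMod n) ≠ 0)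
    (hall : ∀ s, (3 : ZMod n) * (j s : ZMod n) = 0) (X Y : Fin (k * t) × ZMod n) :
    (GI n (k * t) (rep k t j)).Adj X Y ↔ X ≠ Y ∧
      (X.2 = Y.2 ∨ (X.1 = Y.1 ∧ X.2 ≠ Y.2 ∧ (3 : ZMod n) * (Y.2 - X.2) = 0)) := by
  rw [GI_adj_iff]
  have hj1 : ((rep k t j X.1 : ℤ) : ZMod n) ≠ 0 := (hj X.1.modNat).1
  have hall1 : (3 : ZMod n) * ((rep k t j X.1 : ℤ) : ZMod n) = 0 := hall X.1.modNat
  constructor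
  · rintro ⟨hne, h | ⟨h1, h2⟩⟩
    · exact ⟨hne, Or.inl h⟩
    · refine ⟨hne, Or.inr ⟨h1, ?_, ?_⟩⟩
      · rcases h2 with h2 | h2
        · intro hs; rw [hs] at h2; exact hj1 (by linear_combination -h2)
        · intro hs; rw [hs] at h2; exact hj1 (by linear_combination -h2)
      · rcases h2 with h2 | h2
        · linear_combination (3 : ZMod n) * h2 + hall1
        · linear_combination (-3 : ZMod n) * h2 - hall1
  · rintro ⟨hne, h | ⟨h1, hne2, h3⟩⟩
    · exact ⟨hne, Or.inl h⟩
    · have hd0 : Y.2 - X.2 ≠ 0 := sub_ne_zero_of_ne (Ne.symm hne2)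
      rcases tor3 hd0 h3 hj1 hall1 with hd | hd
      · exact ⟨hne, Or.inr ⟨h1, Or.inl (by linear_combination hd)⟩⟩
      · exact ⟨hne, Or.inr ⟨h1, Or.inr (by linear_combination -hd)⟩⟩

lemma exc_construction (n k t : ℕ) [NeZero n] [NeZero (k * t)] (j : Fin t → ℤ)
    (hj : ∀ s, (j s : ZMod n) ≠ 0 ∧ ((2 * j s : ℤ) : ZMod n) ≠ 0)
    (hall : ∀ s, (3 : ZMod n) * (j s : ZMod n) = 0) :
    ∃ H' : Subgroup (Equiv.Perm (Fin (k * t) × ZMod n)),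
      IsRegularAutGroup (GI n (k * t) (rep k t j)) H' ∧ rho n (k * t) ∈ H' := by
  set T : Fin (k * t) → ZMod n → Equiv.Perm (Fin (k * t) × ZMod n) :=
    fun c e => (Equiv.addRight c).prodCongr (Equiv.addRight e) with hT
  have hTapp : ∀ c e X, T c e X = (X.1 + c, X.2 + e) := fun c e X => rfl
  have hTmul : ∀ c e c' e', T c e * T c' e' = T (c' + c) (e' + e) := by
    intro c e c' e'
    apply Equiv.ext
    intro X
    rw [Equiv.Perm.mul_apply, hTapp, hTapp, hTapp]
    dsimp only
    exact Prod.ext (add_assoc _ _ _) (add_assoc _ _ _)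
  have hTone : T 0 0 = 1 := by
    apply Equiv.ext
    intro X
    rw [hTapp]
    simp
  refine ⟨{ carrier := {g | ∃ c e, g = T c e}
            one_mem' := ⟨0, 0, hTone.symm⟩
            mul_mem' := ?_
            inv_mem' := ?_ }, ⟨?_, ?_⟩, ?_⟩
  · rintro a b ⟨c, e, rfl⟩ ⟨c', e', rfl⟩
    exact ⟨c' + c, e' + e, hTmul c e c' e'⟩
  · rintro a ⟨c, e, rfl⟩
    have h1 : T (-c) (-e) * T c e = 1 := by
      rw [hTmul]
      simp [hTone]
    exact ⟨-c, -e, inv_eq_of_mul_eq_one_left h1⟩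
  · rintro g ⟨c, e, rfl⟩ X Y
    rw [exc_adj n k t j hj hall, exc_adj n k t j hj hall, hTapp, hTapp]
    dsimp only
    simp only [ne_eq, Prod.ext_iff, add_left_inj, add_sub_add_right_eq_sub]
  · intro X Y
    refine ⟨T (Y.1 - X.1) (Y.2 - X.2), ⟨⟨_, _, rfl⟩, ?_⟩, ?_⟩
    · rw [hTapp]
      exact Prod.ext (by dsimp only; rw [add_comm]; exact sub_add_cancel _ _)
        (by dsimp only; rw [add_comm]; exact sub_add_cancel _ _)
    · rintro g ⟨⟨c', e', rfl⟩, hval⟩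
      rw [hTapp] at hval
      have e1 : X.1 + c' = Y.1 := congrArg Prod.fst hval
      have e2 : X.2 + e' = Y.2 := congrArg Prod.snd hval
      rw [show c' = Y.1 - X.1 from by rw [← e1]; abel,
        show e' = Y.2 - X.2 from by rw [← e2]; abel]
  · exact ⟨0, 1, by
      apply Equiv.ext
      intro X
      rw [hTapp]
      simp [rho, Prod.map]⟩

end AuxGI

/-- if `Aut(GI(n;j))` has a vertex-regular subgroup containing the
standard rotation, then so does `Aut(GI(n;[k]j))` for every `k > 1`. -/
theorem GI_rep_regular_subgroup (n t : ℕ) (hn : 3 ≤ n) (ht : 1 ≤ t) (j : Fin t → ℤ)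
    (hj : ∀ s, (j s : ZMod n) ≠ 0 ∧ ((2 * j s : ℤ) : ZMod n) ≠ 0)
    (H : Subgroup (Equiv.Perm (Fin t × ZMod n)))
    (hH : IsRegularAutGroup (GI n t j) H) (hrho : rho n t ∈ H) :
    ∀ k : ℕ, 1 < k → ∃ H' : Subgroup (Equiv.Perm (Fin (k * t) × ZMod n)),
      IsRegularAutGroup (GI n (k * t) (rep k t j)) H' ∧ rho n (k * t) ∈ H' := by
  intro k hk
  haveI : NeZero n := ⟨by omega⟩
  haveI : NeZero k := ⟨by omega⟩
  haveI : NeZero (k * t) := ⟨Nat.mul_ne_zero (by omega) (by omega)⟩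
  by_cases hall : ∀ s, (3 : ZMod n) * ((j s : ℤ) : ZMod n) = 0
  · exact exc_construction n k t j hj hall
  · have hcase : t ≤ 2 ∨ (3 ≤ t ∧ ∀ s, (3 : ZMod n) * ((j s : ℤ) : ZMod n) ≠ 0) := by
      rcases le_or_gt t 2 with h | h
      · exact Or.inl h
      · push_neg at hall
        obtain ⟨s₀, hs₀⟩ := hall
        exact Or.inr ⟨h, fun s hs => not_mixed hj hH h hs₀ hs⟩
    exact lift_construction n k t j H hH hrho (good_all hj hH hrho hcase)
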